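/- Lemma 1: Let B ≥ 1, λ > 0, and let r, s : Fin B → ℝ be vectors with strictly positive entries such that r majorizes s. Let μ_r be the product measure on (Fin B → ℝ) whose i-th factor is the exponential distribution with rate λ · r i, and define the service time T(r) = ∫ (sup_i x i) dμ_r(x), and similarly T(s) for μ_s. Then T(r) ≥ T(s); that is, if one batch assignment majorizes another, its expected overall service time (the expected maximum of the corresponding independent exponential batch recovery times) is at least as large. -/

import Mathlib

open Finset MeasureTheory ProbabilityTheory

/-- `Majorizes r s` : the vector `r` majorizes the vector `s`, i.e. they have the same
total sum and, for every `m ≤ B`, the largest sum of `m` entries of `r` is at least the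
largest sum of `m` entries of `s`. -/
def Majorizes {B : ℕ} (r s : Fin B → ℝ) : Prop :=
  (∑ i, r i = ∑ i, s i) ∧
    ∀ m ≤ B, ∀ S : Finset (Fin B), S.card = m →
      ∃ T : Finset (Fin B), T.card = m ∧ ∑ i ∈ S, s i ≤ ∑ i ∈ T, r i

/-!
By the layer-cake formula, `E[max_i X_i] = ∫₀^∞ P(max_i X_i > t) dt`, and for independent
exponentials `P(max_i X_i ≤ t) = ∏_i (1 - exp (-λ r_i t))`. So it suffices that
`x ↦ ∏_i (1 - exp (-x_i))` reverses majorization. After taking logarithms this is Karamata's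
inequality for the concave function `u ↦ log (1 - exp (-u))`: bound each term by the tangent
line at the corresponding entry of `s` sorted decreasingly, and sum the error by parts against
the prefix-sum inequalities that majorization provides.
-/

open Real

section OrderedSum

variable {ι M : Type*} [AddCommMonoid M] [LinearOrder M] [IsOrderedAddMonoid M]

theorem Finset.sum_le_sum_of_card_eq_of_forall_le {s t : Finset ι} {f : ι → M}
    (hst : #s = #t) (h : ∀ i ∈ s, ∀ j ∈ t, f i ≤ f j) : ∑ i ∈ s, f i ≤ ∑ j ∈ t, f j := by
  rcases s.eq_empty_or_nonempty with rfl | hs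
  · rw [card_empty, eq_comm, card_eq_zero] at hst
    simp [hst]
  · calc ∑ i ∈ s, f i ≤ #s • s.sup' hs f := sum_le_card_nsmul _ _ _ fun i hi => le_sup' f hi
      _ = #t • s.sup' hs f := by rw [hst]
      _ ≤ ∑ j ∈ t, f j := card_nsmul_le_sum _ _ _ fun j hj => sup'_le hs f fun i hi => h i hi j hj

theorem Antitone.sum_le_sum_of_card_eq_of_initial_segment [Preorder ι] [DecidableEq ι]
    {f : ι → M} (hf : Antitone f) {U V : Finset ι} (hUV : #U = #V) (hV : ∀ i ∈ V, ∀ j ∉ V, i ≤ j) :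
    ∑ i ∈ U, f i ≤ ∑ i ∈ V, f i := by
  rw [← sum_inter_add_sum_sdiff U V, ← sum_inter_add_sum_sdiff V U, inter_comm]
  gcongr 1
  exact sum_le_sum_of_card_eq_of_forall_le (card_sdiff_comm hUV) fun i hi j hj =>
    hf (hV j (mem_sdiff.1 hj).1 i (mem_sdiff.1 hi).2)

end OrderedSum

theorem Fin.sum_mul_le_mul_sum_of_monotone {n : ℕ} {w d : Fin (n + 1) → ℝ} (hw : Monotone w)
    (hd : ∀ k, 0 ≤ ∑ i ≤ k, d i) : ∑ i, w i * d i ≤ w (Fin.last n) * ∑ i, d i := by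
  induction n with
  | zero => simp
  | succ n ih =>
    have hprefix : ∀ k : Fin (n + 1), 0 ≤ ∑ i ≤ k, d i.castSucc := fun k => by
      rw [← Fin.sum_Iic_castSucc]; exact hd _
    have hD : 0 ≤ ∑ i, d (Fin.castSucc i) := by
      simpa [← Fin.top_eq_last] using hprefix (Fin.last n)
    have hlast : w (Fin.last n).castSucc ≤ w (Fin.last (n + 1)) := hw (Fin.le_last _)
    rw [Fin.sum_univ_castSucc, Fin.sum_univ_castSucc d, mul_add]
    gcongr ?_ + _
    exact (ih (hw.comp Fin.strictMono_castSucc.monotone) hprefix).trans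
      (mul_le_mul_of_nonneg_right hlast hD)

theorem Fin.sum_mul_nonpos_of_monotone {n : ℕ} {w d : Fin n → ℝ} (hw : Monotone w)
    (hd : ∀ k, 0 ≤ ∑ i ≤ k, d i) (hsum : ∑ i, d i = 0) : ∑ i, w i * d i ≤ 0 := by
  cases n with
  | zero => simp
  | succ n => simpa [hsum] using Fin.sum_mul_le_mul_sum_of_monotone hw hd

theorem sum_le_sum_of_supergradient_of_sum_Iic_le {n : ℕ} {x y : Fin n → ℝ} {g g' : ℝ → ℝ}
    {I : Set ℝ} (hg : ∀ u ∈ I, ∀ v ∈ I, g u ≤ g v + g' v * (u - v)) (hx : ∀ i, x i ∈ I)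
    (hy : ∀ i, y i ∈ I) (hy_anti : Antitone y) (hprefix : ∀ k, ∑ i ≤ k, y i ≤ ∑ i ≤ k, x i)
    (hsum : ∑ i, x i = ∑ i, y i) : ∑ i, g (x i) ≤ ∑ i, g (y i) := by
  have hg' : AntitoneOn g' I := fun u hu v hv huv => by
    rcases huv.eq_or_lt with rfl | huv
    · rfl
    · -- adding the two tangent inequalities gives `0 ≤ (g' v - g' u) * (u - v)`
      nlinarith [hg u hu v hv, hg v hv u hu]
  have hw : Monotone fun i => g' (y i) := fun i j hij => hg' (hy j) (hy i) (hy_anti hij)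
  have hd : ∀ k, 0 ≤ ∑ i ≤ k, (x i - y i) := fun k => by
    rw [sum_sub_distrib, sub_nonneg]; exact hprefix k
  have habel : ∑ i, g' (y i) * (x i - y i) ≤ 0 :=
    Fin.sum_mul_nonpos_of_monotone hw hd (by rw [sum_sub_distrib, hsum, sub_self])
  calc ∑ i, g (x i) ≤ ∑ i, (g (y i) + g' (y i) * (x i - y i)) :=
        sum_le_sum fun i _ => hg _ (hx i) _ (hy i)
    _ = ∑ i, g (y i) + ∑ i, g' (y i) * (x i - y i) := sum_add_distrib
    _ ≤ ∑ i, g (y i) := add_le_of_nonpos_right habel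

namespace Majorizes

variable {B : ℕ} {r s : Fin B → ℝ}

theorem sum_Iic_comp_le (h : Majorizes r s) {σ : Equiv.Perm (Fin B)} (hσ : Antitone (r ∘ σ))
    (τ : Equiv.Perm (Fin B)) (k : Fin B) : ∑ i ≤ k, s (τ i) ≤ ∑ i ≤ k, r (σ i) := by
  obtain ⟨T, hT, hST⟩ :=
    h.2 _ ((card_le_univ _).trans_eq (Fintype.card_fin B)) ((Iic k).map τ.toEmbedding) rfl
  calc ∑ i ≤ k, s (τ i) = ∑ i ∈ (Iic k).map τ.toEmbedding, s i := by simp [sum_map]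
    _ ≤ ∑ i ∈ T, r i := hST
    _ = ∑ i ∈ T.map σ.symm.toEmbedding, r (σ i) := by simp [sum_map]
    _ ≤ ∑ i ≤ k, r (σ i) :=
        hσ.sum_le_sum_of_card_eq_of_initial_segment (by simp [hT]) fun i hi j hj =>
          (mem_Iic.1 hi).trans (not_le.1 (mem_Iic.not.1 hj)).le

theorem sum_le_sum_of_supergradient (h : Majorizes r s) {g g' : ℝ → ℝ} {I : Set ℝ}
    (hg : ∀ u ∈ I, ∀ v ∈ I, g u ≤ g v + g' v * (u - v)) (hr : ∀ i, r i ∈ I) (hs : ∀ i, s i ∈ I) :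
    ∑ i, g (r i) ≤ ∑ i, g (s i) := by
  set σ := Tuple.sort (OrderDual.toDual ∘ r)
  set τ := Tuple.sort (OrderDual.toDual ∘ s)
  have hσ : Antitone (r ∘ σ) := monotone_toDual_comp_iff.1 (Tuple.monotone_sort _)
  have hτ : Antitone (s ∘ τ) := monotone_toDual_comp_iff.1 (Tuple.monotone_sort _)
  rw [← Equiv.sum_comp σ (fun i => g (r i)), ← Equiv.sum_comp τ (fun i => g (s i))]
  refine sum_le_sum_of_supergradient_of_sum_Iic_le hg (fun i => hr _) (fun i => hs _) hτ
    (h.sum_Iic_comp_le hσ τ) ?_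
  rw [Equiv.sum_comp σ r, Equiv.sum_comp τ s, h.1]

theorem const_mul (h : Majorizes r s) {c : ℝ} (hc : 0 ≤ c) :
    Majorizes (fun i => c * r i) (fun i => c * s i) := by
  refine ⟨by rw [← mul_sum, ← mul_sum, h.1], fun m hm S hS => ?_⟩
  obtain ⟨T, hT, hST⟩ := h.2 m hm S hS
  exact ⟨T, hT, by rw [← mul_sum, ← mul_sum]; exact mul_le_mul_of_nonneg_left hST hc⟩

end Majorizes

theorem one_sub_exp_neg_pos {w : ℝ} (hw : 0 < w) : 0 < 1 - exp (-w) :=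
  sub_pos.2 (exp_lt_one_iff.2 (neg_lt_zero.2 hw))

theorem one_sub_exp_neg_nonneg {w : ℝ} (hw : 0 ≤ w) : 0 ≤ 1 - exp (-w) :=
  sub_nonneg.2 (exp_le_one_iff.2 (neg_nonpos.2 hw))

theorem log_one_sub_exp_neg_le {u v : ℝ} (hu : 0 < u) (hv : 0 < v) :
    log (1 - exp (-u)) ≤ log (1 - exp (-v)) + exp (-v) / (1 - exp (-v)) * (u - v) := by
  have hu' := one_sub_exp_neg_pos hu
  have hv' := one_sub_exp_neg_pos hv
  have hexp : exp (-v) - exp (-u) ≤ exp (-v) * (u - v) := by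
    have hsplit : exp (-u) = exp (-v) * exp (v - u) := by rw [← exp_add]; ring_nf
    nlinarith [add_one_le_exp (v - u), exp_pos (-v)]
  calc log (1 - exp (-u)) = log (1 - exp (-v)) + log ((1 - exp (-u)) / (1 - exp (-v))) := by
        rw [log_div hu'.ne' hv'.ne']; ring
    _ ≤ log (1 - exp (-v)) + ((1 - exp (-u)) / (1 - exp (-v)) - 1) := by
        gcongr; exact log_le_sub_one_of_pos (div_pos hu' hv')
    _ = log (1 - exp (-v)) + (exp (-v) - exp (-u)) / (1 - exp (-v)) := by
        rw [div_sub_one hv'.ne']; ring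
    _ ≤ log (1 - exp (-v)) + exp (-v) / (1 - exp (-v)) * (u - v) := by
        rw [div_mul_eq_mul_div]; gcongr

theorem Majorizes.prod_one_sub_exp_neg_le {B : ℕ} {r s : Fin B → ℝ} (h : Majorizes r s)
    (hr : ∀ i, 0 < r i) (hs : ∀ i, 0 < s i) :
    ∏ i, (1 - exp (-r i)) ≤ ∏ i, (1 - exp (-s i)) := by
  have hr' : ∀ i, 0 < 1 - exp (-r i) := fun i => one_sub_exp_neg_pos (hr i)
  have hs' : ∀ i, 0 < 1 - exp (-s i) := fun i => one_sub_exp_neg_pos (hs i)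
  rw [← log_le_log_iff (prod_pos fun i _ => hr' i) (prod_pos fun i _ => hs' i),
    log_prod fun i _ => (hr' i).ne', log_prod fun i _ => (hs' i).ne']
  exact h.sum_le_sum_of_supergradient (I := Set.Ioi 0)
    (fun u hu v hv => log_one_sub_exp_neg_le hu hv) hr hs

section Exponential

open Set

theorem expMeasure_Iic {ρ : ℝ} (hρ : 0 < ρ) {t : ℝ} (ht : 0 ≤ t) :
    expMeasure ρ (Iic t) = ENNReal.ofReal (1 - exp (-(ρ * t))) := by
  have := isProbabilityMeasure_expMeasure hρ
  rw [← ofReal_cdf, cdf_expMeasure_eq hρ, if_pos ht]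

theorem expMeasure_Ioi {ρ : ℝ} (hρ : 0 < ρ) {t : ℝ} (ht : 0 ≤ t) :
    expMeasure ρ (Ioi t) = ENNReal.ofReal (exp (-(ρ * t))) := by
  have := isProbabilityMeasure_expMeasure hρ
  rw [← compl_Iic, prob_compl_eq_one_sub measurableSet_Iic, expMeasure_Iic hρ ht,
    ← ENNReal.ofReal_one, ← ENNReal.ofReal_sub _ (one_sub_exp_neg_nonneg (mul_nonneg hρ.le ht)),
    sub_sub_cancel]

theorem ae_nonneg_expMeasure {ρ : ℝ} (hρ : 0 < ρ) : ∀ᵐ y ∂expMeasure ρ, 0 ≤ y := by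
  refine ae_iff.2 (measure_mono_null (fun y hy => ?_) ((expMeasure_Iic hρ le_rfl).trans ?_))
  · exact mem_Iic.2 (not_le.1 hy).le
  · simp

theorem integral_le_integral_of_meas_lt_le {α : Type*} [MeasurableSpace α] {μ ν : Measure α}
    {f : α → ℝ} (hf : Measurable f) (hμ : 0 ≤ᵐ[μ] f) (hν : 0 ≤ᵐ[ν] f) (hint : Integrable f ν)
    (h : ∀ t > 0, μ {x | t < f x} ≤ ν {x | t < f x}) : ∫ x, f x ∂μ ≤ ∫ x, f x ∂ν := by
  have hfin : ∫⁻ t in Ioi 0, ν {x | t < f x} ≠ ⊤ := by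
    rw [← lintegral_eq_lintegral_meas_lt ν hν hf.aemeasurable]
    exact hint.lintegral_lt_top.ne
  rw [integral_eq_lintegral_of_nonneg_ae hμ hf.aestronglyMeasurable,
    integral_eq_lintegral_of_nonneg_ae hν hf.aestronglyMeasurable,
    lintegral_eq_lintegral_meas_lt μ hμ hf.aemeasurable,
    lintegral_eq_lintegral_meas_lt ν hν hf.aemeasurable]
  exact ENNReal.toReal_mono hfin (setLIntegral_mono' measurableSet_Ioi h)

section PiExpMeasure

variable {ι : Type*} [Fintype ι] [Nonempty ι] {a : ι → ℝ}

theorem ae_iSup_nonneg_pi_expMeasure (ha : ∀ i, 0 < a i) :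
    ∀ᵐ x ∂Measure.pi (fun i => expMeasure (a i)), 0 ≤ ⨆ i, x i := by
  have := fun i => isProbabilityMeasure_expMeasure (ha i)
  obtain ⟨i⟩ := ‹Nonempty ι›
  filter_upwards [(measurePreserving_eval _ i).quasiMeasurePreserving.ae
    (ae_nonneg_expMeasure (ha i))] with x hx
  exact hx.trans (le_ciSup (Finite.bddAbove_range x) i)

theorem pi_expMeasure_lt_iSup (ha : ∀ i, 0 < a i) {t : ℝ} (ht : 0 ≤ t) :
    Measure.pi (fun i => expMeasure (a i)) {x | t < ⨆ i, x i}
      = 1 - ENNReal.ofReal (∏ i, (1 - exp (-(a i * t)))) := by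
  have := fun i => isProbabilityMeasure_expMeasure (ha i)
  have hset : {x : ι → ℝ | t < ⨆ i, x i} = (univ.pi fun _ => Iic t)ᶜ := by
    ext x
    simp only [Set.mem_ofPred_eq, Set.mem_compl_iff, Set.mem_univ_pi, Set.mem_Iic,
      ← ciSup_le_iff (Finite.bddAbove_range x), not_le]
  rw [hset, prob_compl_eq_one_sub (MeasurableSet.univ_pi fun _ => measurableSet_Iic),
    Measure.pi_pi, ENNReal.ofReal_prod_of_nonneg]
  · simp_rw [expMeasure_Iic (ha _) ht]
  · exact fun i _ => one_sub_exp_neg_nonneg (mul_nonneg (ha i).le ht)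

theorem pi_expMeasure_lt_iSup_le_sum (ha : ∀ i, 0 < a i) {t : ℝ} (ht : 0 ≤ t) :
    Measure.pi (fun i => expMeasure (a i)) {x | t < ⨆ i, x i}
      ≤ ∑ i, ENNReal.ofReal (exp (-(a i * t))) := by
  have := fun i => isProbabilityMeasure_expMeasure (ha i)
  calc Measure.pi (fun i => expMeasure (a i)) {x | t < ⨆ i, x i}
      ≤ Measure.pi (fun i => expMeasure (a i)) (⋃ i, Function.eval i ⁻¹' Ioi t) := by
        refine measure_mono fun x hx => ?_
        simpa [lt_ciSup_iff (Finite.bddAbove_range x)] using hx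
    _ ≤ ∑ i, Measure.pi (fun i => expMeasure (a i)) (Function.eval i ⁻¹' Ioi t) :=
        measure_iUnion_fintype_le _ _
    _ = ∑ i, ENNReal.ofReal (exp (-(a i * t))) := by
        simp_rw [(measurePreserving_eval _ _).measure_preimage measurableSet_Ioi.nullMeasurableSet,
          expMeasure_Ioi (ha _) ht]

theorem integrable_iSup_pi_expMeasure (ha : ∀ i, 0 < a i) :
    Integrable (fun x : ι → ℝ => ⨆ i, x i) (Measure.pi fun i => expMeasure (a i)) := by
  refine ⟨(Measurable.iSup measurable_pi_apply).aestronglyMeasurable,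
    (hasFiniteIntegral_iff_ofReal (ae_iSup_nonneg_pi_expMeasure ha)).2 ?_⟩
  rw [lintegral_eq_lintegral_meas_lt _ (ae_iSup_nonneg_pi_expMeasure ha)
    (Measurable.iSup measurable_pi_apply).aemeasurable]
  calc ∫⁻ t in Ioi 0, Measure.pi (fun i => expMeasure (a i)) {x | t < ⨆ i, x i}
      ≤ ∫⁻ t in Ioi 0, ∑ i, ENNReal.ofReal (exp (-(a i * t))) :=
        setLIntegral_mono' measurableSet_Ioi fun t ht =>
          pi_expMeasure_lt_iSup_le_sum ha (le_of_lt ht)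
    _ = ∑ i, ∫⁻ t in Ioi 0, ENNReal.ofReal (exp (-(a i * t))) :=
        lintegral_finsetSum _ fun i _ => by fun_prop
    _ < ⊤ := ENNReal.sum_lt_top.2 fun i _ => by
        simpa only [neg_mul] using (exp_neg_integrableOn_Ioi 0 (ha i)).lintegral_lt_top

end PiExpMeasure

end Exponential

/-- Lemma 1: if the batch assignment `r` majorizes the batch assignment `s` (both with
strictly positive entries), then the expected overall service time — the expectation of the
maximum of `B` independent exponential batch recovery times, with rates `λ ⬝ r i`
(resp. `λ ⬝ s i`) — is at least as large for `r` as for `s`. -/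
theorem expected_max_service_time_monotone_in_majorization (B : ℕ) (hB : 1 ≤ B)
    (lam : ℝ) (hlam : 0 < lam) (r s : Fin B → ℝ)
    (hr : ∀ i, 0 < r i) (hs : ∀ i, 0 < s i) (hmaj : Majorizes r s) :
    ∫ x, (⨆ i, x i) ∂(Measure.pi fun i => expMeasure (lam * s i))
      ≤ ∫ x, (⨆ i, x i) ∂(Measure.pi fun i => expMeasure (lam * r i)) := by
  have : Nonempty (Fin B) := ⟨⟨0, hB⟩⟩
  have har : ∀ i, 0 < lam * r i := fun i => mul_pos hlam (hr i)
  have has : ∀ i, 0 < lam * s i := fun i => mul_pos hlam (hs i)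
  refine integral_le_integral_of_meas_lt_le (Measurable.iSup measurable_pi_apply)
    (ae_iSup_nonneg_pi_expMeasure has) (ae_iSup_nonneg_pi_expMeasure har)
    (integrable_iSup_pi_expMeasure har) fun t ht => ?_
  have hlt : 0 < lam * t := mul_pos hlam ht
  have hprod := (hmaj.const_mul hlt.le).prod_one_sub_exp_neg_le
    (fun i => mul_pos hlt (hr i)) (fun i => mul_pos hlt (hs i))
  rw [pi_expMeasure_lt_iSup has ht.le, pi_expMeasure_lt_iSup har ht.le]
  refine tsub_le_tsub_left (ENNReal.ofReal_le_ofReal ?_) _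
  simpa only [mul_right_comm _ t] using hprod
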